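/- For all real numbers a₁, a₂, a₃, the 3-form φ = −3a₁·(e^{146}+e^{157}) − 3a₂·(e^{147}−e^{156}) + a₁·e^{245} − a₁·e^{267} + a₃·(e^{247}−e^{256}) + a₃·(e^{346}+e^{357}) − a₂·e^{345} + a₂·e^{367} on ℝ⁷ is not definite, i.e., there exists a nonzero v ∈ ℝ⁷ with (ι_vφ)∧(ι_vφ)∧φ = 0. -/

import Mathlib

open AlternatingMap

/-- `ℝ⁷`. -/
abbrev V7 : Type := Fin 7 → ℝ

/-- Wedge product of real-valued alternating forms on `V7`. -/
noncomputable def wedge {m n : ℕ} (φ : V7 [⋀^Fin m]→ₗ[ℝ] ℝ) (ψ : V7 [⋀^Fin n]→ₗ[ℝ] ℝ) :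
    V7 [⋀^Fin (m + n)]→ₗ[ℝ] ℝ :=
  ((TensorProduct.lid ℝ ℝ).toLinearMap.compAlternatingMap (φ.domCoprod ψ)).domDomCongr
    finSumFinEquiv

open Fin.NatCast in
/-- The dual basis covector `eⁱ` (1-indexed: `i = 1, …, 7`) as a 1-form on `ℝ⁷`. -/
noncomputable def eF (i : ℕ) : V7 [⋀^Fin 1]→ₗ[ℝ] ℝ :=
  AlternatingMap.ofSubsingleton ℝ V7 ℝ (0 : Fin 1) (LinearMap.proj ((i - 1 : ℕ) : Fin 7))

/-- `e^{ij} := eⁱ ∧ eʲ` (1-indexed). -/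
noncomputable def eW2 (i j : ℕ) : V7 [⋀^Fin 2]→ₗ[ℝ] ℝ := wedge (eF i) (eF j)

/-- `e^{ijk} := eⁱ ∧ eʲ ∧ eᵏ` (1-indexed). -/
noncomputable def eW3 (i j k : ℕ) : V7 [⋀^Fin 3]→ₗ[ℝ] ℝ := wedge (wedge (eF i) (eF j)) (eF k)

/-- The volume form `e^{1234567} = e¹∧e²∧e³∧e⁴∧e⁵∧e⁶∧e⁷`. -/
noncomputable def vol7 : V7 [⋀^Fin 7]→ₗ[ℝ] ℝ :=
  wedge (wedge (wedge (wedge (wedge (wedge (eF 1) (eF 2)) (eF 3)) (eF 4)) (eF 5)) (eF 6)) (eF 7)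

open Fin.NatCast in
/-- The standard basis vector `eᵢ` of `ℝ⁷` (1-indexed: `i = 1, …, 7`). -/
noncomputable def bV (i : ℕ) : V7 := Pi.single ((i - 1 : ℕ) : Fin 7) 1

/-- Interior product `ι_v φ` of a vector with a 3-form: `(x, y) ↦ φ (v, x, y)`. -/
noncomputable def iprod (v : V7) (φ : V7 [⋀^Fin 3]→ₗ[ℝ] ℝ) : V7 [⋀^Fin 2]→ₗ[ℝ] ℝ :=
  φ.curryLeft v

/-- The 7-form `(ι_v φ) ∧ (ι_v φ) ∧ φ`. -/
noncomputable def G2vol (v : V7) (φ : V7 [⋀^Fin 3]→ₗ[ℝ] ℝ) : V7 [⋀^Fin 7]→ₗ[ℝ] ℝ :=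
  wedge (wedge (iprod v φ) (iprod v φ)) φ

/-- A 3-form on `ℝ⁷` is definite if `(ι_vφ)∧(ι_vφ)∧φ ≠ 0` for every nonzero `v`. -/
def IsDefinite (φ : V7 [⋀^Fin 3]→ₗ[ℝ] ℝ) : Prop :=
  ∀ v : V7, v ≠ 0 → G2vol v φ ≠ 0

/-!
Write `φ = e¹ ∧ α₁ + e² ∧ α₂ + e³ ∧ α₃` with `αᵢ` two-forms on `span(e₄, …, e₇)`. All three
`αᵢ` lie in the three-dimensional span of `e^{45} − e^{67}, e^{46} + e^{57}, e^{47} − e^{56}`,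
and for `v = c₁e₁ + c₂e₂ + c₃e₃` one gets `ι_vφ = c₁α₁ + c₂α₂ + c₃α₃`. The `3 × 3` coefficient
matrix of the `αᵢ` is singular, with `(a₃, 3a₂, 3a₁)` in its kernel (and `φ = 0` when that
vector vanishes), so some nonzero `v` has `ι_vφ = 0`, and then `(ι_vφ) ∧ (ι_vφ) ∧ φ = 0`.
-/

open Equiv

lemma wedge_zero_left {m n : ℕ} (ψ : V7 [⋀^Fin n]→ₗ[ℝ] ℝ) :
    wedge (0 : V7 [⋀^Fin m]→ₗ[ℝ] ℝ) ψ = 0 := by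
  ext x
  simp [wedge, ← AlternatingMap.domCoprod'_apply]

lemma G2vol_eq_zero_of_iprod_eq_zero {v : V7} {φ : V7 [⋀^Fin 3]→ₗ[ℝ] ℝ} (h : iprod v φ = 0) :
    G2vol v φ = 0 := by
  rw [G2vol, h, wedge_zero_left, wedge_zero_left]

-- `Sum.elim (Fin.castAdd n) (Fin.natAdd m)` is `finSumFinEquiv` unfolded; in this form `simp`
-- evaluates the indices of concrete permutations.
lemma wedge_apply {m n : ℕ} (φ : V7 [⋀^Fin m]→ₗ[ℝ] ℝ) (ψ : V7 [⋀^Fin n]→ₗ[ℝ] ℝ)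
    (x : Fin (m + n) → V7) :
    ((m.factorial * n.factorial : ℕ) : ℝ) * wedge φ ψ x =
      ∑ σ : Perm (Fin m ⊕ Fin n), ((Perm.sign σ : ℤ) : ℝ) *
        (φ (fun i => x (Sum.elim (Fin.castAdd n) (Fin.natAdd m) (σ (Sum.inl i)))) *
         ψ (fun i => x (Sum.elim (Fin.castAdd n) (Fin.natAdd m) (σ (Sum.inr i))))) := by
  set y : Fin m ⊕ Fin n → V7 := fun i => x (finSumFinEquiv i)
  have h_alt : MultilinearMap.alternatization
      ((φ : MultilinearMap ℝ (fun _ : Fin m => V7) ℝ).domCoprod ↑ψ) y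
        = ((m.factorial * n.factorial : ℕ) : ℝ) • φ.domCoprod ψ y := by
    rw [MultilinearMap.domCoprod_alternization_eq, Nat.cast_smul_eq_nsmul]
    simp
  have h_lid := congrArg (TensorProduct.lid ℝ ℝ) h_alt
  rw [map_smul] at h_lid
  rw [show wedge φ ψ x = TensorProduct.lid ℝ ℝ (φ.domCoprod ψ y) from rfl, ← smul_eq_mul, ← h_lid,
    MultilinearMap.alternatization_apply, map_sum]
  refine Finset.sum_congr rfl fun σ _ => ?_
  rw [MultilinearMap.domDomCongr_apply, MultilinearMap.domCoprod_apply, Units.smul_def,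
    ← Int.cast_smul_eq_zsmul ℝ, map_smul, TensorProduct.lid_tmul, smul_eq_mul, smul_eq_mul]
  rfl

lemma Fintype.sum_perm_fin_one_sum_fin_one {M : Type*} [AddCommMonoid M]
    (f : Perm (Fin 1 ⊕ Fin 1) → M) :
    ∑ σ, f σ = f 1 + f (swap (.inl 0) (.inr 0)) := by
  rw [show (Finset.univ : Finset (Perm (Fin 1 ⊕ Fin 1))) = {1, swap (.inl 0) (.inr 0)} by decide,
    Finset.sum_pair (by decide)]

lemma Fintype.sum_perm_fin_two_sum_fin_one {M : Type*} [AddCommMonoid M]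
    (f : Perm (Fin 2 ⊕ Fin 1) → M) :
    ∑ σ, f σ = f 1 + f (swap (.inl 0) (.inl 1)) + f (swap (.inl 0) (.inr 0))
      + f (swap (.inl 1) (.inr 0)) + f (swap (.inl 0) (.inl 1) * swap (.inl 1) (.inr 0))
      + f (swap (.inl 1) (.inr 0) * swap (.inl 0) (.inl 1)) := by
  rw [show (Finset.univ : Finset (Perm (Fin 2 ⊕ Fin 1))) = {1, swap (.inl 0) (.inl 1),
      swap (.inl 0) (.inr 0), swap (.inl 1) (.inr 0), swap (.inl 0) (.inl 1) * swap (.inl 1) (.inr 0),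
      swap (.inl 1) (.inr 0) * swap (.inl 0) (.inl 1)} by decide]
  rw [Finset.sum_insert (by decide), Finset.sum_insert (by decide), Finset.sum_insert (by decide),
    Finset.sum_insert (by decide), Finset.sum_insert (by decide), Finset.sum_singleton]
  abel

section Coordinates
open Fin.NatCast

lemma eF_apply (i : ℕ) (y : Fin 1 → V7) : eF i y = y 0 ((i - 1 : ℕ) : Fin 7) := rfl

lemma eW2_apply (i j : ℕ) (x : Fin 2 → V7) :
    eW2 i j x = x 0 ((i - 1 : ℕ) : Fin 7) * x 1 ((j - 1 : ℕ) : Fin 7)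
      - x 1 ((i - 1 : ℕ) : Fin 7) * x 0 ((j - 1 : ℕ) : Fin 7) := by
  have h := wedge_apply (eF i) (eF j) x
  rw [Fintype.sum_perm_fin_one_sum_fin_one] at h
  simp [eF_apply, Perm.sign_swap'] at h
  rw [eW2, h]
  ring

lemma eW3_apply (i j k : ℕ) (x : Fin 3 → V7) :
    eW3 i j k x =
        x 0 ((i - 1 : ℕ) : Fin 7) * (x 1 ((j - 1 : ℕ) : Fin 7) * x 2 ((k - 1 : ℕ) : Fin 7)
          - x 2 ((j - 1 : ℕ) : Fin 7) * x 1 ((k - 1 : ℕ) : Fin 7))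
      - x 1 ((i - 1 : ℕ) : Fin 7) * (x 0 ((j - 1 : ℕ) : Fin 7) * x 2 ((k - 1 : ℕ) : Fin 7)
          - x 2 ((j - 1 : ℕ) : Fin 7) * x 0 ((k - 1 : ℕ) : Fin 7))
      + x 2 ((i - 1 : ℕ) : Fin 7) * (x 0 ((j - 1 : ℕ) : Fin 7) * x 1 ((k - 1 : ℕ) : Fin 7)
          - x 1 ((j - 1 : ℕ) : Fin 7) * x 0 ((k - 1 : ℕ) : Fin 7)) := by
  have h := wedge_apply (eW2 i j) (eF k) x
  rw [Fintype.sum_perm_fin_two_sum_fin_one] at h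
  simp [eW2_apply, eF_apply, Perm.sign_swap', swap_apply_of_ne_of_ne, Perm.sign_mul] at h
  rw [eW3, ← eW2.eq_1]
  linarith

noncomputable def phi (a₁ a₂ a₃ : ℝ) : V7 [⋀^Fin 3]→ₗ[ℝ] ℝ :=
  (-(3 * a₁)) • (eW3 1 4 6 + eW3 1 5 7) + (-(3 * a₂)) • (eW3 1 4 7 - eW3 1 5 6)
    + a₁ • eW3 2 4 5 - a₁ • eW3 2 6 7
    + a₃ • (eW3 2 4 7 - eW3 2 5 6) + a₃ • (eW3 3 4 6 + eW3 3 5 7)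
    - a₂ • eW3 3 4 5 + a₂ • eW3 3 6 7

-- The hypotheses say `c₁α₁ + c₂α₂ + c₃α₃ = 0`, read off in the basis
-- `e^{45} − e^{67}, e^{46} + e^{57}, e^{47} − e^{56}`.
lemma iprod_phi_eq_zero {a₁ a₂ a₃ c₁ c₂ c₃ : ℝ} (h₁ : a₁ * c₂ - a₂ * c₃ = 0)
    (h₂ : 3 * a₁ * c₁ - a₃ * c₃ = 0) (h₃ : 3 * a₂ * c₁ - a₃ * c₂ = 0) :
    iprod ![c₁, c₂, c₃, 0, 0, 0, 0] (phi a₁ a₂ a₃) = 0 := by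
  ext x
  simp [iprod, phi, eW3_apply]
  linear_combination (x 0 3 * x 1 4 - x 1 3 * x 0 4 - x 0 5 * x 1 6 + x 1 5 * x 0 6) * h₁
    - (x 0 3 * x 1 5 - x 1 3 * x 0 5 + x 0 4 * x 1 6 - x 1 4 * x 0 6) * h₂
    - (x 0 3 * x 1 6 - x 1 3 * x 0 6 - x 0 4 * x 1 5 + x 1 4 * x 0 5) * h₃

end Coordinates

/-- The 3-form
`φ = −3a₁(e^{146}+e^{157}) − 3a₂(e^{147}−e^{156}) + a₁e^{245} − a₁e^{267}
  + a₃(e^{247}−e^{256}) + a₃(e^{346}+e^{357}) − a₂e^{345} + a₂e^{367}` is not definite. -/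
theorem stmt11 (a₁ a₂ a₃ : ℝ) :
    let φ : V7 [⋀^Fin 3]→ₗ[ℝ] ℝ :=
      (-(3 * a₁)) • (eW3 1 4 6 + eW3 1 5 7) + (-(3 * a₂)) • (eW3 1 4 7 - eW3 1 5 6)
        + a₁ • eW3 2 4 5 - a₁ • eW3 2 6 7
        + a₃ • (eW3 2 4 7 - eW3 2 5 6) + a₃ • (eW3 3 4 6 + eW3 3 5 7)
        - a₂ • eW3 3 4 5 + a₂ • eW3 3 6 7
    ∃ v : V7, v ≠ 0 ∧ G2vol v φ = 0 := by
  show ∃ v : V7, v ≠ 0 ∧ G2vol v (phi a₁ a₂ a₃) = 0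
  by_cases h : a₁ = 0 ∧ a₂ = 0 ∧ a₃ = 0
  · obtain ⟨rfl, rfl, rfl⟩ := h
    refine ⟨![1, 0, 0, 0, 0, 0, 0], by simp, G2vol_eq_zero_of_iprod_eq_zero ?_⟩
    exact iprod_phi_eq_zero (by ring) (by ring) (by ring)
  · refine ⟨![a₃, 3 * a₂, 3 * a₁, 0, 0, 0, 0], fun hv => h ?_, G2vol_eq_zero_of_iprod_eq_zero ?_⟩
    · simp at hv
      tauto
    · exact iprod_phi_eq_zero (by ring) (by ring) (by ring)
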